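/- For every graph G, the maximum cop number over all (temporally connected) periodic graphs with footprint G is at most tw(G) + 1, where tw(G) is the treewidth of G. That is, for every periodic graph 𝒢 with footprint G, c(𝒢) ≤ tw(G) + 1. -/

import Mathlib

/-- The closed neighbourhood of `u` in `G` (contains `u` itself, modelling
reflexive graphs / the option of standing still). -/
def cN {V : Type*} (G : SimpleGraph V) (u : V) : Set V := insert u {v | G.Adj u v}

/-- A periodic temporal graph: a `p`-periodic sequence of snapshots on a common
vertex set `V`. -/
structure PeriodicGraph (V : Type*) where
  p : ℕ
  p_pos : 0 < p
  snap : ℕ → SimpleGraph V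
  periodic : ∀ t, snap (t + p) = snap t

namespace PeriodicGraph

variable {V : Type*}

/-- A strategy for `k` cops: initial positions and a move function
(depending on the round, current cop positions and robber position). -/
structure CopStrategy (𝒢 : PeriodicGraph V) (k : ℕ) where
  init : Fin k → V
  move : ℕ → (Fin k → V) → V → (Fin k → V)

/-- A strategy for the robber: an initial position (chosen after seeing the
cops' initial positions) and a move function (depending on the round, the
cops' positions after their move, and the robber's position). -/
structure RobStrategy (𝒢 : PeriodicGraph V) (k : ℕ) where
  init : (Fin k → V) → V
  move : ℕ → (Fin k → V) → V → V

/-- A cop strategy is legal if every move stays in the closed neighbourhood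
of the current position in the current snapshot. -/
def CopStrategy.Legal {𝒢 : PeriodicGraph V} {k : ℕ} (σ : CopStrategy 𝒢 k) : Prop :=
  ∀ t c r i, σ.move t c r i ∈ cN (𝒢.snap t) (c i)

/-- A robber strategy is legal if every move stays in the closed neighbourhood
of the current position in the current snapshot. -/
def RobStrategy.Legal {𝒢 : PeriodicGraph V} {k : ℕ} (ρ : RobStrategy 𝒢 k) : Prop :=
  ∀ t c r, ρ.move t c r ∈ cN (𝒢.snap t) r

/-- The positions (cops, robber) at the start of round `t` of the play
determined by the two strategies.  In round `t` the cops move first, then the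
robber, both along the snapshot `𝒢.snap t`. -/
def play {𝒢 : PeriodicGraph V} {k : ℕ} (σ : CopStrategy 𝒢 k) (ρ : RobStrategy 𝒢 k) :
    ℕ → (Fin k → V) × V
  | 0 => (σ.init, ρ.init σ.init)
  | t + 1 =>
    (σ.move t (play σ ρ t).1 (play σ ρ t).2,
     ρ.move t (σ.move t (play σ ρ t).1 (play σ ρ t).2) (play σ ρ t).2)

/-- The robber is captured: at some point a cop occupies the robber's vertex,
either at the start of a round or right after the cops' move in a round. -/
def Captured {𝒢 : PeriodicGraph V} {k : ℕ} (σ : CopStrategy 𝒢 k) (ρ : RobStrategy 𝒢 k) :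
    Prop :=
  ∃ t i, (play σ ρ t).1 i = (play σ ρ t).2 ∨ (play σ ρ (t + 1)).1 i = (play σ ρ t).2

/-- `k` cops have a winning strategy on `𝒢`. -/
def CopsWin (𝒢 : PeriodicGraph V) (k : ℕ) : Prop :=
  ∃ σ : CopStrategy 𝒢 k, σ.Legal ∧ ∀ ρ : RobStrategy 𝒢 k, ρ.Legal → Captured σ ρ

/-- The cop number of a periodic graph: the least `k` such that `k` cops win. -/
noncomputable def copNumber (𝒢 : PeriodicGraph V) : ℕ := sInf {k | 𝒢.CopsWin k}

/-- The footprint of a periodic graph: the union of all snapshots. -/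
def footprint (𝒢 : PeriodicGraph V) : SimpleGraph V := ⨆ t, 𝒢.snap t

/-- The induced periodic subgraph on a set `S` of vertices. -/
def restrict (𝒢 : PeriodicGraph V) (S : Set V) : PeriodicGraph S where
  p := 𝒢.p
  p_pos := 𝒢.p_pos
  snap t := SimpleGraph.induce S (𝒢.snap t)
  periodic t := congrArg (SimpleGraph.induce S) (𝒢.periodic t)

/-- A static graph, seen as a periodic graph of period 1. -/
def ofStatic (G : SimpleGraph V) : PeriodicGraph V :=
  ⟨1, Nat.one_pos, fun _ => G, fun _ => rfl⟩

end PeriodicGraph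

/-- The cop number of a static (reflexive) graph. -/
noncomputable def copNumberS {V : Type*} (G : SimpleGraph V) : ℕ :=
  (PeriodicGraph.ofStatic G).copNumber

/-- `G` has a tree decomposition of width at most `w`. -/
def TreeDecompWidthLE {V : Type*} (G : SimpleGraph V) (w : ℕ) : Prop :=
  ∃ (ι : Type) (T : SimpleGraph ι) (B : ι → Finset V),
    T.IsTree ∧
    (∀ v : V, ∃ x, v ∈ B x) ∧
    (∀ u v : V, G.Adj u v → ∃ x, u ∈ B x ∧ v ∈ B x) ∧
    (∀ v : V, (SimpleGraph.induce {x | v ∈ B x} T).Connected) ∧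
    (∀ x, (B x).card ≤ w + 1)

/-- The treewidth of a graph. -/
noncomputable def treewidth {V : Type*} (G : SimpleGraph V) : ℕ :=
  sInf {w | TreeDecompWidthLE G w}


namespace CopAux

open Relation

variable {V : Type*} {α : Type*}

lemma mem_cN_self {H : SimpleGraph V} (u : V) : u ∈ cN H u := Set.mem_insert _ _

lemma mem_cN_of_adj {H : SimpleGraph V} {u v : V} (h : H.Adj u v) : v ∈ cN H u :=
  Set.mem_insert_of_mem _ h

lemma cN_cases {H : SimpleGraph V} {u v : V} (h : v ∈ cN H u) : v = u ∨ H.Adj u v := by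
  rcases h with h | h
  · exact Or.inl h
  · exact Or.inr h

/-- one-step relation in `G` avoiding the set `S`. -/
def Stp (G : SimpleGraph α) (S : Set α) (a b : α) : Prop := G.Adj a b ∧ a ∉ S ∧ b ∉ S

/-- the connected component of `r` in `G - S`. -/
def Comp (G : SimpleGraph α) (S : Set α) (r : α) : Set α :=
  {v | Relation.ReflTransGen (Stp G S) r v}

lemma mem_comp_self (G : SimpleGraph α) (S : Set α) (r : α) : r ∈ Comp G S r :=
  ReflTransGen.refl

lemma comp_not_mem {G : SimpleGraph α} {S : Set α} {r : α} (hr : r ∉ S) :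
    ∀ v ∈ Comp G S r, v ∉ S := by
  intro v hv
  induction hv with
  | refl => exact hr
  | tail _ h ih => exact h.2.2

lemma comp_adj {G : SimpleGraph α} {S : Set α} {r u v : α} (hr : r ∉ S)
    (hu : u ∈ Comp G S r) (ha : G.Adj u v) (hv : v ∉ S) : v ∈ Comp G S r :=
  ReflTransGen.tail hu ⟨ha, comp_not_mem hr u hu, hv⟩

lemma stp_symm {G : SimpleGraph α} {S : Set α} : Symmetric (Stp G S) := by
  intro a b ⟨h1, h2, h3⟩; exact ⟨h1.symm, h3, h2⟩

lemma comp_symm {G : SimpleGraph α} {S : Set α} {r v : α} (h : v ∈ Comp G S r) :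
    r ∈ Comp G S v := by
  induction h with
  | refl => exact ReflTransGen.refl
  | tail _ h ih => exact ReflTransGen.head (stp_symm h) ih

lemma comp_trans {G : SimpleGraph α} {S : Set α} {r u v : α} (h : u ∈ Comp G S r)
    (h' : v ∈ Comp G S u) : v ∈ Comp G S r := ReflTransGen.trans h h'

lemma comp_congr {G : SimpleGraph α} {S : Set α} {r u : α} (h : u ∈ Comp G S r) :
    Comp G S u = Comp G S r := by
  ext v
  exact ⟨fun hv => comp_trans h hv, fun hv => comp_trans (comp_symm h) hv⟩

lemma comp_walk {G : SimpleGraph α} {S : Set α} {r v : α} (hr : r ∉ S)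
    (hv : v ∈ Comp G S r) : ∃ w : G.Walk r v, ∀ u ∈ w.support, u ∉ S := by
  induction hv with
  | refl =>
    refine ⟨SimpleGraph.Walk.nil, ?_⟩
    intro u hu
    simp only [SimpleGraph.Walk.support_nil, List.mem_singleton] at hu
    subst hu; exact hr
  | tail _ h ih =>
    obtain ⟨w, hw⟩ := ih
    refine ⟨w.concat h.1, ?_⟩
    intro u hu
    rw [SimpleGraph.Walk.support_concat] at hu
    rcases List.mem_append.1 hu with hu | hu
    · exact hw u hu
    · simp only [List.mem_singleton] at hu
      subst hu; exact h.2.2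

lemma walk_to_comp {G : SimpleGraph α} {S : Set α} {a b : α}
    (w : G.Walk a b) (h : ∀ u ∈ w.support, u ∉ S) : b ∈ Comp G S a := by
  induction w with
  | nil => exact ReflTransGen.refl
  | cons ha q ih =>
    refine ReflTransGen.head ⟨ha, ?_, ?_⟩ (ih ?_)
    · exact h _ (by simp)
    · exact h _ (by simp [SimpleGraph.Walk.support_cons])
    · intro u hu; exact h u (by simp [SimpleGraph.Walk.support_cons, hu])

end CopAux


section Periodic

variable {V : Type*} (𝒢 : PeriodicGraph V)

lemma snap_add_mul (t m : ℕ) : 𝒢.snap (t + 𝒢.p * m) = 𝒢.snap t := by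
  induction m with
  | zero => simp
  | succ m ih =>
    have : t + 𝒢.p * (m + 1) = (t + 𝒢.p * m) + 𝒢.p := by ring
    rw [this, 𝒢.periodic, ih]

lemma snap_mod (t : ℕ) : 𝒢.snap t = 𝒢.snap (t % 𝒢.p) := by
  conv_lhs => rw [show t = t % 𝒢.p + 𝒢.p * (t / 𝒢.p) from (Nat.mod_add_div _ _).symm]
  rw [snap_add_mul]

lemma snap_le_footprint (t : ℕ) : 𝒢.snap t ≤ 𝒢.footprint := le_iSup _ t

lemma footprint_adj {u v : V} : 𝒢.footprint.Adj u v ↔ ∃ t, (𝒢.snap t).Adj u v :=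
  SimpleGraph.iSup_adj

/-- Temporal travel along a footprint walk: starting anywhere in time, one can
reach the other endpoint by a legal temporal walk. -/
lemma travel_aux {u v : V} (w : 𝒢.footprint.Walk u v) :
    ∀ t0 : ℕ, ∃ t1, t0 ≤ t1 ∧ ∃ f : ℕ → V, f t0 = u ∧ f t1 = v ∧
      ∀ t, f (t + 1) ∈ cN (𝒢.snap t) (f t) := by
  induction w with
  | @nil a =>
    intro t0
    exact ⟨t0, le_refl _, fun _ => a, rfl, rfl, fun t => CopAux.mem_cN_self _⟩
  | @cons a b c ha q ih =>
    intro t0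
    obtain ⟨s, hs⟩ := (footprint_adj 𝒢).1 ha
    set s' := s + 𝒢.p * t0 with hs'def
    have hts' : t0 ≤ s' := by
      have h1 : t0 ≤ 𝒢.p * t0 := Nat.le_mul_of_pos_left t0 𝒢.p_pos
      omega
    have hsnap : 𝒢.snap s' = 𝒢.snap s := snap_add_mul 𝒢 s t0
    obtain ⟨t1, ht1, f', hf0, hf1, hleg⟩ := ih (s' + 1)
    refine ⟨t1, by omega, fun t => if t ≤ s' then a else f' t, by simp [hts'], ?_, ?_⟩
    · have : ¬ (t1 ≤ s') := by omega
      simp [this, hf1]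
    · intro t
      by_cases h1 : t + 1 ≤ s'
      · simp only [if_pos h1, if_pos (by omega : t ≤ s')]
        exact CopAux.mem_cN_self _
      · by_cases h2 : t ≤ s'
        · have ht : t = s' := by omega
          simp only [if_neg h1, if_pos h2]
          subst ht
          rw [hf0]
          exact CopAux.mem_cN_of_adj (by rw [hsnap]; exact hs)
        · simp only [if_neg h1, if_neg h2]
          exact hleg t

lemma travel (hconn : 𝒢.footprint.Connected) (u v : V) (t0 : ℕ) :
    ∃ t1, t0 ≤ t1 ∧ ∃ f : ℕ → V, f t0 = u ∧ f t1 = v ∧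
      ∀ t, f (t + 1) ∈ cN (𝒢.snap t) (f t) := by
  obtain ⟨w⟩ := hconn.preconnected u v
  exact travel_aux 𝒢 w t0

end Periodic

section Game

variable {V : Type*} {k : ℕ} (𝒢 : PeriodicGraph V) (ρ : PeriodicGraph.RobStrategy 𝒢 k)

/-- Robber's trajectory when it starts at `r0` at time `t0` and the cops follow
the fixed schedule `cfg`. -/
def robAt (cfg : ℕ → Fin k → V) (t0 : ℕ) (r0 : V) : ℕ → V
  | 0 => r0
  | s + 1 => ρ.move (t0 + s) (cfg (t0 + s + 1)) (robAt cfg t0 r0 s)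

/-- From time `t0`, cop configuration `c0` and robber position `r0`, the cops
have a (full-history) schedule capturing the robber. -/
def CaptureFrom (t0 : ℕ) (c0 : Fin k → V) (r0 : V) : Prop :=
  ∃ cfg : ℕ → Fin k → V, cfg t0 = c0 ∧
    (∀ t i, cfg (t + 1) i ∈ cN (𝒢.snap t) (cfg t i)) ∧
    ∃ s i, cfg (t0 + s) i = robAt 𝒢 ρ cfg t0 r0 s ∨
           cfg (t0 + s + 1) i = robAt 𝒢 ρ cfg t0 r0 s

lemma capture_now {t0 : ℕ} {c0 : Fin k → V} {r0 : V} (h : ∃ i, c0 i = r0) :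
    CaptureFrom 𝒢 ρ t0 c0 r0 := by
  obtain ⟨i, hi⟩ := h
  exact ⟨fun _ => c0, rfl, fun t j => CopAux.mem_cN_self _, 0, i, Or.inl hi⟩

lemma capture_step {t0 : ℕ} {c0 c' : Fin k → V} {r0 : V}
    (hc' : ∀ i, c' i ∈ cN (𝒢.snap t0) (c0 i))
    (h : CaptureFrom 𝒢 ρ (t0 + 1) c' (ρ.move t0 c' r0)) :
    CaptureFrom 𝒢 ρ t0 c0 r0 := by
  obtain ⟨cfg', hc0', hleg', s, i, hcap⟩ := h
  set g : ℕ → Fin k → V := fun t => if t ≤ t0 then c0 else cfg' t with hg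
  have hgt : ∀ t, t0 < t → g t = cfg' t := by
    intro t ht; simp [hg, Nat.not_le.2 ht]
  have hg1 : g (t0 + 1) = c' := by rw [hgt _ (by omega), hc0']
  have hrob : ∀ s, robAt 𝒢 ρ g t0 r0 (s + 1) =
      robAt 𝒢 ρ cfg' (t0 + 1) (ρ.move t0 c' r0) s := by
    intro s
    induction s with
    | zero => simp [robAt, hg1]
    | succ s ih =>
      show ρ.move (t0 + (s+1)) (g (t0 + (s+1) + 1)) (robAt 𝒢 ρ g t0 r0 (s+1)) = ρ.move (t0 + 1 + s) (cfg' (t0 + 1 + s + 1)) (robAt 𝒢 ρ cfg' (t0+1) (ρ.move t0 c' r0) s)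
      rw [ih, hgt _ (by omega), show t0 + (s+1) = t0 + 1 + s by omega]
  refine ⟨g, by simp [hg], ?_, s + 1, i, ?_⟩
  · intro t j
    rcases Nat.lt_trichotomy t t0 with ht | ht | ht
    · simp only [hg, if_pos (by omega : t + 1 ≤ t0), if_pos (le_of_lt ht)]
      exact CopAux.mem_cN_self _
    · subst ht
      rw [hg1]
      simp only [hg, if_pos (le_refl t)]
      exact hc' j
    · rw [hgt _ ht, hgt _ (by omega)]
      exact hleg' t j
  · rw [hrob s, hgt (t0 + (s+1)) (by omega), hgt (t0 + (s+1) + 1) (by omega),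
      show t0 + (s+1) = t0 + 1 + s by omega, show t0 + 1 + s + 1 = t0 + 1 + s + 1 from rfl]
    exact hcap

lemma capture_next {t0 : ℕ} {c0 c' : Fin k → V} {r0 : V}
    (hc' : ∀ i, c' i ∈ cN (𝒢.snap t0) (c0 i)) (h : ∃ i, c' i = r0) :
    CaptureFrom 𝒢 ρ t0 c0 r0 := by
  obtain ⟨i, hi⟩ := h
  set g : ℕ → Fin k → V := fun t => if t ≤ t0 then c0 else c' with hg
  refine ⟨g, by simp [hg], ?_, 0, i, Or.inr ?_⟩
  · intro t j
    rcases Nat.lt_trichotomy t t0 with ht | ht | ht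
    · simp only [hg, if_pos (by omega : t + 1 ≤ t0), if_pos (le_of_lt ht)]
      exact CopAux.mem_cN_self _
    · subst ht
      simp only [hg, if_neg (by omega : ¬ t + 1 ≤ t), if_pos (le_refl t)]
      exact hc' j
    · simp only [hg, if_neg (by omega : ¬ t + 1 ≤ t0), if_neg (by omega : ¬ t ≤ t0)]
      exact CopAux.mem_cN_self _
  · show g (t0 + 0 + 1) i = robAt 𝒢 ρ g t0 r0 0
    simp only [hg, if_neg (by omega : ¬ t0 + 0 + 1 ≤ t0)]
    exact hi

end Game

section TreePart

open CopAux SimpleGraph Relation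

variable {V : Type*} {ι : Type}

/-- A walk within a subtree between two bags containing `v`. -/
lemma subtree_walk (T : SimpleGraph ι) (B : ι → Finset V)
    (hsubt : ∀ v : V, (SimpleGraph.induce {x | v ∈ B x} T).Connected)
    {v : V} {z z' : ι} (hz : v ∈ B z) (hz' : v ∈ B z') :
    ∃ w : T.Walk z z', ∀ a ∈ w.support, v ∈ B a := by
  obtain ⟨w⟩ := (hsubt v).preconnected ⟨z, hz⟩ ⟨z', hz'⟩
  refine ⟨w.map (Embedding.induce {x | v ∈ B x}).toHom, ?_⟩
  intro a ha
  change a ∈ (w.map (Embedding.induce {x | v ∈ B x}).toHom).support at ha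
  rw [Walk.support_map, List.mem_map] at ha
  obtain ⟨b, _, rfl⟩ := ha
  exact b.2

lemma bag_side (T : SimpleGraph ι) (B : ι → Finset V)
    (hsubt : ∀ v : V, (SimpleGraph.induce {x | v ∈ B x} T).Connected)
    {v : V} {x z z' : ι} (hz : v ∈ B z) (hz' : v ∈ B z') (hx : v ∉ B x) :
    z' ∈ Comp T {x} z := by
  obtain ⟨w, hw⟩ := subtree_walk T B hsubt hz hz'
  apply walk_to_comp w
  intro a ha hax
  rw [Set.mem_singleton_iff] at hax
  subst hax
  exact hx (hw a ha)

lemma bags_side (G : SimpleGraph V) (T : SimpleGraph ι) (B : ι → Finset V)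
    (hedge : ∀ u v : V, G.Adj u v → ∃ x, u ∈ B x ∧ v ∈ B x)
    (hsubt : ∀ v : V, (SimpleGraph.induce {x | v ∈ B x} T).Connected)
    (x : ι) {r0 : V} (hr0 : r0 ∉ B x) {z0 : ι} (hz0 : r0 ∈ B z0) :
    ∀ u ∈ Comp G (↑(B x) : Set V) r0, ∀ z, u ∈ B z → z ∈ Comp T {x} z0 := by
  intro u hu
  induction hu with
  | refl => intro z hz; exact bag_side T B hsubt hz0 hz hr0
  | @tail b c hb hbc ih =>
    intro z hz
    obtain ⟨m, hmb, hmc⟩ := hedge _ _ hbc.1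
    have hcx : c ∉ B x := by
      intro hcx; exact hbc.2.2 (Finset.mem_coe.2 hcx)
    exact comp_trans (ih m hmb) (bag_side T B hsubt hmc hz hcx)

lemma neighbor_unique {T : SimpleGraph ι} (hT : T.IsTree) {x q y : ι}
    (hq : T.Adj x q) (hy : T.Adj x y) (h : q ∈ Comp T {x} y) : q = y := by
  classical
  by_contra hne
  obtain ⟨w, hw⟩ := comp_walk (show y ∉ ({x} : Set ι) by simp [hy.ne']) h
  have hxw : x ∉ w.bypass.support := fun hx => hw x (w.support_bypass_subset hx) rfl
  have hpq := hT.IsAcyclic.path_unique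
    (⟨Walk.cons hy w.bypass, w.bypass_isPath.cons hxw⟩ : T.Path x q)
    (⟨Walk.cons hq Walk.nil, by simp [Walk.cons_isPath_iff, hq.ne]⟩ : T.Path x q)
  have hlen := congrArg (fun p : T.Path x q => p.1.length) hpq
  simp only [Walk.length_cons, Walk.length_nil] at hlen
  have : w.bypass.length = 0 := by omega
  exact hne (Walk.eq_of_length_eq_zero this).symm

lemma prefix_to_adj (T : SimpleGraph ι) (Sb : Set ι) :
    ∀ {m x : ι} (w : T.Walk m x), m ≠ x → (∀ a ∈ w.support, a ∈ Sb) →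
      ∃ q, T.Adj q x ∧ q ∈ Sb ∧ q ∈ Comp T {x} m := by
  intro m x w
  induction w with
  | nil => intro hmx _; exact absurd rfl hmx
  | @cons a b c hab q ih =>
    intro hmx hS
    by_cases hbc : b = c
    · subst hbc
      refine ⟨a, hab, hS a (by simp), ReflTransGen.refl⟩
    · obtain ⟨q', hq1, hq2, hq3⟩ := ih hbc (fun u hu => hS u (by simp [Walk.support_cons, hu]))
      refine ⟨q', hq1, hq2, ReflTransGen.head ⟨hab, by simp [hmx], by simp [hbc]⟩ hq3⟩

lemma escape_in_sep (G : SimpleGraph V) (T : SimpleGraph ι) (B : ι → Finset V)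
    (hT : T.IsTree)
    (hedge : ∀ u v : V, G.Adj u v → ∃ x, u ∈ B x ∧ v ∈ B x)
    (hsubt : ∀ v : V, (SimpleGraph.induce {x | v ∈ B x} T).Connected)
    {x y : ι} (hxy : T.Adj x y) {r0 : V}
    (Hside : ∀ u ∈ Comp G (↑(B x) : Set V) r0, ∀ z, u ∈ B z → z ∈ Comp T {x} y)
    {u b : V} (hu : u ∈ Comp G (↑(B x) : Set V) r0) (hadj : G.Adj u b)
    (hbx : b ∈ B x) : b ∈ B y := by
  obtain ⟨m, hmu, hmb⟩ := hedge _ _ hadj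
  have hm : m ∈ Comp T {x} y := Hside u hu m hmu
  have hmx : m ≠ x := by
    have := comp_not_mem (show y ∉ ({x} : Set ι) by simp [hxy.ne']) m hm
    simpa using this
  obtain ⟨w, hw⟩ := subtree_walk T B hsubt hmb hbx
  obtain ⟨q, hq1, hq2, hq3⟩ := prefix_to_adj T {i | b ∈ B i} w hmx (fun a ha => hw a ha)
  have : q = y := neighbor_unique hT hq1.symm hxy (comp_trans hm hq3)
  subst this
  exact hq2

lemma choose_y {T : SimpleGraph ι} (hT : T.IsTree) {x zs : ι} (hne : zs ≠ x) :
    ∃ y, T.Adj x y ∧ T.dist y zs + 1 ≤ T.dist x zs ∧ y ∈ Comp T {x} zs := by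
  have hconn := hT.isConnected
  have hd0 : T.dist x zs ≠ 0 := fun h => hne ((hconn.dist_eq_zero_iff.1 h)).symm
  obtain ⟨w, hw⟩ := (hconn.preconnected x zs).exists_walk_length_eq_dist
  cases w with
  | nil => exact absurd rfl hne
  | @cons a b c hab q =>
    have hqlen : q.length + 1 = T.dist x zs := by
      simpa [Walk.length_cons] using hw
    have hxq : x ∉ q.support := by
      intro hx
      obtain ⟨q1, q2, hq12⟩ := Walk.mem_support_iff_exists_append.1 hx
      have h1 : T.dist x zs ≤ q2.length := dist_le q2
      have h2 : q.length = q1.length + q2.length := by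
        rw [hq12, Walk.length_append]
      omega
    refine ⟨b, hab, ?_, ?_⟩
    · have := dist_le q
      omega
    · exact comp_symm (walk_to_comp q (fun u hu hux => hxq (by
        rw [Set.mem_singleton_iff] at hux; rwa [hux] at hu)))

lemma exists_covering {k : ℕ} [Nonempty V] (s : Finset V) (hcard : s.card ≤ k) :
    ∃ c : Fin k → V, (↑s : Set V) ⊆ Set.range c := by
  classical
  have hc : Fintype.card (↥s) ≤ Fintype.card (Fin k) := by
    rw [Fintype.card_coe, Fintype.card_fin]; exact hcard
  obtain ⟨e⟩ := Function.Embedding.nonempty_of_card_le hc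
  refine ⟨fun i => if h : ∃ v : ↥s, e v = i then (h.choose : V) else Classical.arbitrary V, ?_⟩
  intro v hv
  refine ⟨e ⟨v, hv⟩, ?_⟩
  have hex : ∃ v' : ↥s, e v' = e ⟨v, hv⟩ := ⟨⟨v, hv⟩, rfl⟩
  dsimp only
  rw [dif_pos hex]
  have := hex.choose_spec
  have h2 : hex.choose = ⟨v, hv⟩ := e.injective this
  rw [h2]

end TreePart

section MoveCops

open CopAux

variable {V : Type*} {k : ℕ} (𝒢 : PeriodicGraph V) (ρ : PeriodicGraph.RobStrategy 𝒢 k)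

lemma moveCops (hconn : 𝒢.footprint.Connected) (hρ : ρ.Legal)
    (C : Set V) (d : Fin k → V) (L : List (Fin k)) (t0 : ℕ)
    (Hesc : ∀ u ∈ C, ∀ v, 𝒢.footprint.Adj u v → v ∉ C → ∃ i, i ∉ L ∧ d i = v)
    (Hfin : ∀ t, t0 ≤ t → ∀ r ∈ C, CaptureFrom 𝒢 ρ t d r) :
    ∀ l : List (Fin k), (∀ i ∈ l, i ∈ L) → ∀ t, t0 ≤ t → ∀ c : Fin k → V,
      (∀ i, i ∉ l → c i = d i) → ∀ r ∈ C, CaptureFrom 𝒢 ρ t c r := by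
  classical
  intro l
  induction l with
  | nil =>
    intro _ t ht c hc r hr
    have hcd : c = d := funext fun i => hc i (List.not_mem_nil (a := i))
    rw [hcd]
    exact Hfin t ht r hr
  | cons i l ih =>
    intro hsub t ht c hc r hr
    obtain ⟨ta, hta, f, hf0, hf1, hfleg⟩ := travel 𝒢 hconn (c i) (d i) t
    have inner : ∀ m t', t ≤ t' → t' + m = ta → ∀ r', r' ∈ C →
        CaptureFrom 𝒢 ρ t' (Function.update c i (f t')) r' := by
      intro m
      induction m with
      | zero =>
        intro t' htt' hts r' hr'
        have hteq : t' = ta := by omega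
        subst hteq
        rw [hf1]
        refine ih (fun j hj => hsub j (List.mem_cons_of_mem _ hj)) t' (by omega)
          (Function.update c i (d i)) ?_ r' hr'
        intro j hj
        by_cases hji : j = i
        · subst hji; simp
        · rw [Function.update_of_ne hji]
          exact hc j (by simp [hji, hj])
      | succ m ihm =>
        intro t' htt' hts r' hr'
        set c2 : Fin k → V := Function.update c i (f (t' + 1)) with hc2
        have hleg2 : ∀ j, c2 j ∈ cN (𝒢.snap t') (Function.update c i (f t') j) := by
          intro j
          by_cases hji : j = i
          · subst hji
            simp only [hc2, Function.update_self]
            exact hfleg t'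
          · simp only [hc2, Function.update_of_ne hji]
            exact mem_cN_self _
        apply capture_step 𝒢 ρ hleg2
        set r2 := ρ.move t' c2 r' with hr2def
        by_cases hr2 : r2 ∈ C
        · exact ihm (t' + 1) (by omega) (by omega) r2 hr2
        · rcases cN_cases (hρ t' c2 r') with heq | hadj
          · rw [hr2def] at hr2
            rw [heq] at hr2
            exact absurd hr' hr2
          · obtain ⟨j, hjL, hdj⟩ := Hesc r' hr' r2 ((footprint_adj 𝒢).2 ⟨t', hadj⟩) hr2
            apply capture_now
            refine ⟨j, ?_⟩
            have hji : j ≠ i := fun h => hjL (hsub j (h ▸ List.mem_cons_self (a := i) (l := l)))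
            have hjl : j ∉ l := fun h => hjL (hsub j (List.mem_cons_of_mem _ h))
            rw [hc2, Function.update_of_ne hji, hc j (by simp [hji, hjl]), hdj]
    have hres := inner (ta - t) t (le_refl t) (by omega) r hr
    rwa [hf0, Function.update_eq_self] at hres

end MoveCops

section Stage

open CopAux SimpleGraph Relation

variable {V : Type*} [Fintype V] {ι : Type} {k : ℕ}

/-- Distance from `x` to the closest tree node whose bag meets `C`. -/
noncomputable def fdist (T : SimpleGraph ι) (B : ι → Finset V) (x : ι) (C : Set V) : ℕ :=
  sInf ((fun z => T.dist x z) '' {z | ∃ u ∈ C, u ∈ B z})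

lemma stage (𝒢 : PeriodicGraph V) (ρ : PeriodicGraph.RobStrategy 𝒢 k)
    (T : SimpleGraph ι) (B : ι → Finset V)
    (hconn : 𝒢.footprint.Connected) (hρ : ρ.Legal)
    (hT : T.IsTree)
    (hcov : ∀ v : V, ∃ x, v ∈ B x)
    (hedge : ∀ u v : V, 𝒢.footprint.Adj u v → ∃ x, u ∈ B x ∧ v ∈ B x)
    (hsubt : ∀ v : V, (SimpleGraph.induce {x | v ∈ B x} T).Connected)
    (hcard : ∀ x, (B x).card ≤ k) :
    ∀ nc nf : ℕ, ∀ x : ι, ∀ t0 : ℕ, ∀ c0 : Fin k → V, ∀ r0 : V,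
      (↑(B x) : Set V) ⊆ Set.range c0 → r0 ∉ B x →
      (Comp 𝒢.footprint (↑(B x)) r0).ncard ≤ nc →
      fdist T B x (Comp 𝒢.footprint (↑(B x)) r0) ≤ nf →
      CaptureFrom 𝒢 ρ t0 c0 r0 := by
  classical
  intro nc
  induction nc using Nat.strong_induction_on with
  | _ nc IHnc =>
  intro nf
  induction nf using Nat.strong_induction_on with
  | _ nf IHnf =>
  intro x t0 c0 r0 hBr hr0x hnc hnf
  have hV : Nonempty V := hconn.nonempty
  set C : Set V := Comp 𝒢.footprint (↑(B x)) r0 with hCdef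
  have hr0C : r0 ∈ C := mem_comp_self _ _ _
  have hr0x' : r0 ∉ (↑(B x) : Set V) := by simpa using hr0x
  have hCx : ∀ u ∈ C, u ∉ B x := fun u hu h =>
    (comp_not_mem hr0x' u hu) (by simpa using h)
  obtain ⟨z0, hz0⟩ := hcov r0
  have hZs : ((fun z => T.dist x z) '' {z | ∃ u ∈ C, u ∈ B z}).Nonempty :=
    ⟨T.dist x z0, ⟨z0, ⟨r0, hr0C, hz0⟩, rfl⟩⟩
  have hmem := Nat.sInf_mem hZs
  obtain ⟨zs, ⟨us, husC, husB⟩, hzsd⟩ := hmem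
  have hzsx : zs ≠ x := fun h => hCx us husC (h ▸ husB)
  obtain ⟨y, hxy, hyd, hyszs⟩ := choose_y hT hzsx
  have hfd : fdist T B x C = T.dist x zs := by
    rw [fdist]; exact hzsd.symm
  have hf1 : 1 ≤ fdist T B x C := by
    rcases Nat.eq_zero_or_pos (fdist T B x C) with h0 | h1
    · exfalso
      rw [hfd] at h0
      exact hzsx (hT.isConnected.dist_eq_zero_iff.1 h0).symm
    · exact h1
  have Hside : ∀ u ∈ C, ∀ z, u ∈ B z → z ∈ Comp T {x} y := by
    intro u hu z hz
    have h1 : z ∈ Comp T {x} z0 :=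
      bags_side 𝒢.footprint T B hedge hsubt x hr0x hz0 u hu z hz
    have h2 : zs ∈ Comp T {x} z0 :=
      bags_side 𝒢.footprint T B hedge hsubt x hr0x hz0 us husC zs husB
    have hy0 : y ∈ Comp T {x} z0 := comp_trans h2 hyszs
    exact comp_trans (comp_symm hy0) h1
  -- guards and destinations
  set Γ : Finset V := B x ∩ B y with hΓdef
  have hΓx : ∀ v ∈ Γ, v ∈ B x := fun v hv => (Finset.mem_inter.1 hv).1
  have hΓy : ∀ v ∈ Γ, v ∈ B y := fun v hv => (Finset.mem_inter.1 hv).2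
  have hgiex : ∀ v : ↥Γ, ∃ i, c0 i = (v : V) :=
    fun v => hBr (by simpa using hΓx v v.2)
  choose gg hgg using hgiex
  have hgginj : Function.Injective gg := by
    intro v v' h
    have : (v : V) = (v' : V) := by rw [← hgg v, ← hgg v', h]
    exact Subtype.ext this
  set Gd : Finset (Fin k) := Finset.univ.image gg with hGddef
  have hGdcard : Gd.card = Γ.card := by
    rw [hGddef, Finset.card_image_of_injective _ hgginj, Finset.card_univ, Fintype.card_coe]
  set Rest : Finset V := B y \ Γ with hRestdef
  set Movers : Finset (Fin k) := Finset.univ \ Gd with hMoversdef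
  have hRMcard : Rest.card ≤ Movers.card := by
    have h1 : Rest.card = (B y).card - Γ.card := by
      rw [hRestdef, Finset.card_sdiff_of_subset (Finset.inter_subset_right)]
    have h2 : Movers.card = k - Gd.card := by
      rw [hMoversdef, Finset.card_sdiff_of_subset (Finset.subset_univ _), Finset.card_univ,
        Fintype.card_fin]
    have h3 : Γ.card ≤ (B y).card := Finset.card_le_card (Finset.inter_subset_right)
    have h4 := hcard y
    omega
  have hcardRM : Fintype.card (↥Rest) ≤ Fintype.card (↥Movers) := by
    rw [Fintype.card_coe, Fintype.card_coe]; exact hRMcard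
  obtain ⟨e⟩ := Function.Embedding.nonempty_of_card_le hcardRM
  set d : Fin k → V := fun i =>
    if h : ∃ v : ↥Rest, ((e v : ↥Movers) : Fin k) = i then ((h.choose : ↥Rest) : V)
    else c0 i with hddef
  have hdguard : ∀ v : ↥Γ, d (gg v) = c0 (gg v) := by
    intro v
    have hno : ¬ ∃ vr : ↥Rest, ((e vr : ↥Movers) : Fin k) = gg v := by
      rintro ⟨vr, hvr⟩
      have hmem := (e vr).2
      rw [hvr] at hmem
      rw [hMoversdef, Finset.mem_sdiff] at hmem
      exact hmem.2 (by rw [hGddef]; exact Finset.mem_image_of_mem gg (Finset.mem_univ v))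
    rw [hddef]; dsimp only; rw [dif_neg hno]
  have hdcov : (↑(B y) : Set V) ⊆ Set.range d := by
    intro v hv
    have hvy : v ∈ B y := by simpa using hv
    by_cases hvΓ : v ∈ Γ
    · refine ⟨gg ⟨v, hvΓ⟩, ?_⟩
      rw [hdguard ⟨v, hvΓ⟩, hgg ⟨v, hvΓ⟩]
    · have hvR : v ∈ Rest := by rw [hRestdef, Finset.mem_sdiff]; exact ⟨hvy, hvΓ⟩
      refine ⟨((e ⟨v, hvR⟩ : ↥Movers) : Fin k), ?_⟩
      have hex : ∃ vr : ↥Rest, ((e vr : ↥Movers) : Fin k) = ((e ⟨v, hvR⟩ : ↥Movers) : Fin k) :=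
        ⟨⟨v, hvR⟩, rfl⟩
      rw [hddef]; dsimp only; rw [dif_pos hex]
      have hspec := hex.choose_spec
      have : e hex.choose = e ⟨v, hvR⟩ := Subtype.ext hspec
      rw [e.injective this]
  -- the movers list
  set l : List (Fin k) := (List.finRange k).filter (fun i => d i ≠ c0 i) with hldef
  have hnotl : ∀ i, i ∉ l → c0 i = d i := by
    intro i hi
    by_contra hne
    exact hi (by
      rw [hldef, List.mem_filter]
      refine ⟨List.mem_finRange i, ?_⟩
      simp only [decide_eq_true_eq]
      exact fun h => hne h.symm)
  have hguard_notl : ∀ v : ↥Γ, gg v ∉ l := by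
    intro v hvl
    rw [hldef, List.mem_filter] at hvl
    have := hvl.2
    rw [hdguard v] at this
    simp at this
  have Hesc : ∀ u ∈ C, ∀ v, 𝒢.footprint.Adj u v → v ∉ C → ∃ i, i ∉ l ∧ d i = v := by
    intro u hu v hadj hvC
    have hvx : v ∈ B x := by
      by_contra hvx
      exact hvC (comp_adj hr0x' hu hadj (by simpa using hvx))
    have hvy : v ∈ B y :=
      escape_in_sep 𝒢.footprint T B hT hedge hsubt hxy Hside hu hadj hvx
    have hvΓ : v ∈ Γ := Finset.mem_inter.2 ⟨hvx, hvy⟩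
    refine ⟨gg ⟨v, hvΓ⟩, hguard_notl ⟨v, hvΓ⟩, ?_⟩
    rw [hdguard ⟨v, hvΓ⟩, hgg ⟨v, hvΓ⟩]
  have Hfin : ∀ t, t0 ≤ t → ∀ r1 ∈ C, CaptureFrom 𝒢 ρ t d r1 := by
    intro t ht r1 hr1
    by_cases hcap : ∃ i, d i = r1
    · exact capture_now 𝒢 ρ hcap
    · have hr1y : r1 ∉ B y := by
        intro hr1y
        obtain ⟨i, hi⟩ := hdcov (by simpa using hr1y)
        exact hcap ⟨i, hi⟩
      have hr1y' : r1 ∉ (↑(B y) : Set V) := by simpa using hr1y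
      have hC'C : ∀ w ∈ Comp 𝒢.footprint (↑(B y)) r1, w ∈ C := by
        intro w hw
        induction hw with
        | refl => exact hr1
        | @tail b c hb hbc ih =>
          by_cases hcx : c ∈ B x
          · exact absurd (Finset.mem_coe.2
              (escape_in_sep 𝒢.footprint T B hT hedge hsubt hxy Hside ih hbc.1 hcx)) hbc.2.2
          · exact comp_adj hr0x' ih hbc.1 (by simpa using hcx)
      by_cases hA : ∃ v, v ∈ C ∧ v ∈ B y
      · obtain ⟨v, hvC, hvBy⟩ := hA
        have hvC' : v ∉ Comp 𝒢.footprint (↑(B y)) r1 := fun h =>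
          (comp_not_mem hr1y' v h) (by simpa using hvBy)
        have hss : Comp 𝒢.footprint (↑(B y)) r1 ⊂ C :=
          ⟨fun w hw => hC'C w hw, fun hsub => hvC' (hsub hvC)⟩
        have hlt : (Comp 𝒢.footprint (↑(B y)) r1).ncard < C.ncard :=
          Set.ncard_lt_ncard hss (Set.toFinite C)
        have hnc1 : 0 < C.ncard := (Set.ncard_pos (Set.toFinite C)).2 ⟨r0, hr0C⟩
        exact IHnc (nc - 1) (by omega) (fdist T B y (Comp 𝒢.footprint (↑(B y)) r1))
          y t d r1 hdcov hr1y (by omega) (le_refl _)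
      · have hCBy : ∀ v ∈ C, v ∉ B y := by
          intro v hv hvy
          exact hA ⟨v, hv, hvy⟩
        have hCC' : ∀ w ∈ C, w ∈ Comp 𝒢.footprint (↑(B y)) r1 := by
          intro w hw
          have hw1 : w ∈ Comp 𝒢.footprint (↑(B x)) r1 := by
            rw [comp_congr hr1]; exact hw
          clear hw
          induction hw1 with
          | refl => exact mem_comp_self _ _ _
          | @tail b c hb hbc ih =>
            have hbC : b ∈ C := by rw [hCdef, ← comp_congr hr1]; exact hb
            have hcC : c ∈ C := by
              rw [hCdef, ← comp_congr hr1]; exact ReflTransGen.tail hb hbc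
            exact comp_adj hr1y' ih hbc.1 (by simpa using hCBy c hcC)
        have hCeq : Comp 𝒢.footprint (↑(B y)) r1 = C :=
          Set.eq_of_subset_of_subset (fun w hw => hC'C w hw) (fun w hw => hCC' w hw)
        have hfdC' : fdist T B y (Comp 𝒢.footprint (↑(B y)) r1) ≤ nf - 1 := by
          have hle : fdist T B y (Comp 𝒢.footprint (↑(B y)) r1) ≤ T.dist y zs := by
            apply Nat.sInf_le
            exact ⟨zs, ⟨us, by rw [hCeq]; exact husC, husB⟩, rfl⟩
          omega
        exact IHnf (nf - 1) (by omega) y t d r1 hdcov hr1y (by rw [hCeq]; omega) hfdC'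
  exact moveCops 𝒢 ρ hconn hρ C d l t0 Hesc Hfin l (fun i hi => hi) t0 (le_refl _)
    c0 hnotl r0 hr0C

end Stage

section Beat

open CopAux

variable {V : Type*} [Fintype V] {k : ℕ} (𝒢 : PeriodicGraph V)

lemma captureFrom_strategy (ρ : PeriodicGraph.RobStrategy 𝒢 k)
    (c0 : Fin k → V) (h : CaptureFrom 𝒢 ρ 0 c0 (ρ.init c0)) :
    ∃ σ : PeriodicGraph.CopStrategy 𝒢 k, σ.Legal ∧ PeriodicGraph.Captured σ ρ := by
  classical
  obtain ⟨cfg, hcfg0, hleg, s, i, hcap⟩ := h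
  set σ : PeriodicGraph.CopStrategy 𝒢 k :=
    ⟨cfg 0, fun t c r j => if c j = cfg t j then cfg (t + 1) j else c j⟩ with hσ
  have hlegal : σ.Legal := by
    intro t c r j
    show (if c j = cfg t j then cfg (t + 1) j else c j) ∈ _
    split_ifs with hcj
    · rw [hcj]; exact hleg t j
    · exact mem_cN_self _
  have hplay : ∀ t, PeriodicGraph.play σ ρ t = (cfg t, robAt 𝒢 ρ cfg 0 (ρ.init c0) t) := by
    intro t
    induction t with
    | zero =>
      show (σ.init, ρ.init σ.init) = _
      have h1 : σ.init = cfg 0 := rfl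
      rw [h1, hcfg0]
      rfl
    | succ t ih =>
      show (σ.move t (PeriodicGraph.play σ ρ t).1 (PeriodicGraph.play σ ρ t).2,
        ρ.move t (σ.move t (PeriodicGraph.play σ ρ t).1 (PeriodicGraph.play σ ρ t).2)
          (PeriodicGraph.play σ ρ t).2) = _
      rw [ih]
      have hm : σ.move t (cfg t) (robAt 𝒢 ρ cfg 0 (ρ.init c0) t) = cfg (t + 1) := by
        funext j
        show (if cfg t j = cfg t j then cfg (t + 1) j else cfg t j) = cfg (t + 1) j
        rw [if_pos rfl]
      rw [hm]
      have hr : ρ.move t (cfg (t + 1)) (robAt 𝒢 ρ cfg 0 (ρ.init c0) t) =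
          robAt 𝒢 ρ cfg 0 (ρ.init c0) (t + 1) := by
        show _ = ρ.move (0 + t) (cfg (0 + t + 1)) (robAt 𝒢 ρ cfg 0 (ρ.init c0) t)
        rw [Nat.zero_add]
      rw [hr]
  refine ⟨σ, hlegal, s, i, ?_⟩
  rw [hplay s, hplay (s + 1)]
  rw [Nat.zero_add] at hcap
  exact hcap

lemma beatAny (hconn : 𝒢.footprint.Connected)
    {w : ℕ} (hTD : TreeDecompWidthLE 𝒢.footprint w) (hk : k = w + 1) :
    ∀ ρ : PeriodicGraph.RobStrategy 𝒢 k, ρ.Legal →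
      ∃ σ : PeriodicGraph.CopStrategy 𝒢 k, σ.Legal ∧ PeriodicGraph.Captured σ ρ := by
  obtain ⟨ι, T, B, hT, hcov, hedge, hsubt, hbag⟩ := hTD
  intro ρ hρ
  haveI : Nonempty V := hconn.nonempty
  obtain ⟨x0⟩ : Nonempty ι := hT.isConnected.nonempty
  have hcard : ∀ x, (B x).card ≤ k := fun x => by rw [hk]; exact hbag x
  obtain ⟨c0, hc0⟩ := exists_covering (B x0) (hcard x0)
  apply captureFrom_strategy 𝒢 ρ c0
  by_cases hr0 : ρ.init c0 ∈ B x0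
  · exact capture_now 𝒢 ρ (hc0 (by simpa using hr0))
  · exact stage 𝒢 ρ T B hconn hρ hT hcov hedge hsubt hcard
      (Comp 𝒢.footprint (↑(B x0)) (ρ.init c0)).ncard
      (fdist T B x0 (Comp 𝒢.footprint (↑(B x0)) (ρ.init c0)))
      x0 0 c0 (ρ.init c0) hc0 hr0 (le_refl _) (le_refl _)

end Beat

section Determinacy

open CopAux
open scoped Classical

variable {V : Type*} [Fintype V] {k : ℕ} (𝒢 : PeriodicGraph V)

/-- The cop-win rank predicate: from time `t`, cop positions `c`, robber at `r`
(cops to move), the cops can capture within `j` rounds. -/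
def WS : ℕ → ℕ → (Fin k → V) → V → Prop
  | 0 => fun _ c r => ∃ i, c i = r
  | (j + 1) => fun t c r => WS j t c r ∨
      ∃ c', (∀ i, c' i ∈ cN (𝒢.snap t) (c i)) ∧
        ((∃ i, c' i = r) ∨ ∀ r' ∈ cN (𝒢.snap t) r, WS j (t + 1) c' r')

lemma WS_mono : ∀ j' j, j ≤ j' → ∀ t (c : Fin k → V) r, WS 𝒢 j t c r → WS 𝒢 j' t c r := by
  intro j'
  induction j' with
  | zero =>
    intro j hj t c r h
    have hj0 : j = 0 := by omega
    subst hj0; exact h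
  | succ j' ih =>
    intro j hj t c r h
    by_cases hj2 : j = j' + 1
    · subst hj2; exact h
    · exact Or.inl (ih j (by omega) t c r h)

lemma WS_congr : ∀ (j t1 t2 : ℕ), t1 % 𝒢.p = t2 % 𝒢.p →
    ∀ (c : Fin k → V) r, WS 𝒢 j t1 c r ↔ WS 𝒢 j t2 c r := by
  intro j
  induction j with
  | zero => intro t1 t2 h c r; exact Iff.rfl
  | succ j ih =>
    intro t1 t2 hmod c r
    have hsnap : 𝒢.snap t1 = 𝒢.snap t2 := by
      rw [snap_mod 𝒢 t1, snap_mod 𝒢 t2, hmod]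
    have hmod1 : (t1 + 1) % 𝒢.p = (t2 + 1) % 𝒢.p := by
      rw [Nat.add_mod t1 1, Nat.add_mod t2 1, hmod]
    simp only [WS]
    rw [hsnap]
    constructor
    · rintro (h | ⟨c', h1, h2⟩)
      · exact Or.inl ((ih t1 t2 hmod c r).1 h)
      · exact Or.inr ⟨c', h1, h2.imp id fun hh r' hr' =>
          (ih (t1 + 1) (t2 + 1) hmod1 c' r').1 (hh r' hr')⟩
    · rintro (h | ⟨c', h1, h2⟩)
      · exact Or.inl ((ih t1 t2 hmod c r).2 h)
      · exact Or.inr ⟨c', h1, h2.imp id fun hh r' hr' =>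
          (ih (t1 + 1) (t2 + 1) hmod1 c' r').2 (hh r' hr')⟩

lemma WS_stab : ∃ J, ∀ j, J ≤ j → ∀ t (c : Fin k → V) r,
    WS 𝒢 j t c r ↔ WS 𝒢 J t c r := by
  classical
  have hstep : ∀ (j j' : ℕ), (∀ t (c : Fin k → V) r, WS 𝒢 j t c r ↔ WS 𝒢 j' t c r) →
      ∀ t (c : Fin k → V) r, WS 𝒢 (j + 1) t c r ↔ WS 𝒢 (j' + 1) t c r := by
    intro j j' h t c r
    simp only [WS]
    constructor
    · rintro (hh | ⟨c', h1, h2⟩)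
      · exact Or.inl ((h t c r).1 hh)
      · exact Or.inr ⟨c', h1, h2.imp id fun hh r' hr' => (h (t + 1) c' r').1 (hh r' hr')⟩
    · rintro (hh | ⟨c', h1, h2⟩)
      · exact Or.inl ((h t c r).2 hh)
      · exact Or.inr ⟨c', h1, h2.imp id fun hh r' hr' => (h (t + 1) c' r').2 (hh r' hr')⟩
  obtain ⟨J, hJ⟩ : ∃ J, ∀ t (c : Fin k → V) r, WS 𝒢 (J + 1) t c r ↔ WS 𝒢 J t c r := by
    by_contra hne
    push_neg at hne
    set S : ℕ → Set (Fin 𝒢.p × (Fin k → V) × V) :=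
      fun j => {q | WS 𝒢 j (q.1 : ℕ) q.2.1 q.2.2} with hSdef
    have hmono : ∀ j, S j ⊆ S (j + 1) := fun j q h => Or.inl h
    have hssub : ∀ j, S j ⊂ S (j + 1) := by
      intro j
      refine ⟨hmono j, fun hsub => ?_⟩
      obtain ⟨t, c, r, hiff⟩ := hne j
      rcases hiff with ⟨h1, h2⟩ | ⟨h1, h2⟩
      · apply h2
        have hmod : t % 𝒢.p = (t % 𝒢.p) % 𝒢.p := (Nat.mod_mod_of_dvd t dvd_rfl).symm
        have hx : WS 𝒢 (j + 1) (t % 𝒢.p) c r := (WS_congr 𝒢 (j + 1) t (t % 𝒢.p) hmod c r).1 h1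
        have ht : t % 𝒢.p < 𝒢.p := Nat.mod_lt _ 𝒢.p_pos
        have h3 := hsub (show (⟨⟨t % 𝒢.p, ht⟩, c, r⟩ : Fin 𝒢.p × (Fin k → V) × V) ∈ S (j + 1) from hx)
        exact (WS_congr 𝒢 j t (t % 𝒢.p) hmod c r).2 h3
      · exact h1 (Or.inl h2)
    have hcard : ∀ j, j ≤ (S j).ncard := by
      intro j
      induction j with
      | zero => omega
      | succ j ih =>
        have := Set.ncard_lt_ncard (hssub j) (Set.toFinite _)
        omega
    have hN := hcard (Fintype.card (Fin 𝒢.p × (Fin k → V) × V) + 1)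
    have hub : (S (Fintype.card (Fin 𝒢.p × (Fin k → V) × V) + 1)).ncard ≤
        Fintype.card (Fin 𝒢.p × (Fin k → V) × V) := by
      have h1 := Set.ncard_le_ncard (Set.subset_univ
        (S (Fintype.card (Fin 𝒢.p × (Fin k → V) × V) + 1))) (Set.toFinite _)
      rwa [Set.ncard_univ, Nat.card_eq_fintype_card] at h1
    omega
  refine ⟨J, ?_⟩
  intro j hj
  induction j, hj using Nat.le_induction with
  | base => intro t c r; exact Iff.rfl
  | succ j hj ih =>
    intro t c r
    exact (hstep j J ih t c r).trans (hJ t c r)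

lemma copMove_exists {t : ℕ} {c : Fin k → V} {r : V} (h0 : ¬ ∃ i, c i = r)
    (h : ∃ j, WS 𝒢 j t c r) :
    ∃ c', (∀ i, c' i ∈ cN (𝒢.snap t) (c i)) ∧
      ((∃ i, c' i = r) ∨ ∀ r' ∈ cN (𝒢.snap t) r,
        WS 𝒢 (sInf {j | WS 𝒢 j t c r} - 1) (t + 1) c' r') := by
  set j0 := sInf {j | WS 𝒢 j t c r} with hj0def
  have hj0 : WS 𝒢 j0 t c r := Nat.sInf_mem h
  have hj0pos : j0 ≠ 0 := by
    intro hz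
    rw [hz] at hj0
    exact h0 hj0
  obtain ⟨j1, hj1⟩ : ∃ j1, j0 = j1 + 1 := ⟨j0 - 1, by omega⟩
  have hnot : ¬ WS 𝒢 j1 t c r := by
    intro hh
    have := Nat.sInf_le (show j1 ∈ {j | WS 𝒢 j t c r} from hh)
    omega
  have hws : WS 𝒢 (j1 + 1) t c r := by rw [← hj1]; exact hj0
  rcases hws with hh | hE
  · exact absurd hh hnot
  · have he : j0 - 1 = j1 := by omega
    rw [he]
    exact hE

noncomputable def copMove (t : ℕ) (c : Fin k → V) (r : V) : Fin k → V :=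
  if h0 : ∃ i, c i = r then c
  else if h : ∃ j, WS 𝒢 j t c r then (copMove_exists 𝒢 h0 h).choose
  else c

lemma copMove_legal : ∀ t (c : Fin k → V) r i, copMove 𝒢 t c r i ∈ cN (𝒢.snap t) (c i) := by
  intro t c r i
  unfold copMove
  split_ifs with h0 h
  · exact mem_cN_self _
  · exact (copMove_exists 𝒢 h0 h).choose_spec.1 i
  · exact mem_cN_self _

noncomputable def σA (c0 : Fin k → V) : PeriodicGraph.CopStrategy 𝒢 k :=
  ⟨c0, fun t c r => copMove 𝒢 t c r⟩

lemma cap_of_WS (c0 : Fin k → V) (ρ : PeriodicGraph.RobStrategy 𝒢 k) (hρ : ρ.Legal) :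
    ∀ j t, WS 𝒢 j t (PeriodicGraph.play (σA 𝒢 c0) ρ t).1 (PeriodicGraph.play (σA 𝒢 c0) ρ t).2 →
      PeriodicGraph.Captured (σA 𝒢 c0) ρ := by
  intro j
  induction j using Nat.strong_induction_on with
  | _ j IH =>
  intro t hW
  by_cases hcap : ∃ i, (PeriodicGraph.play (σA 𝒢 c0) ρ t).1 i = (PeriodicGraph.play (σA 𝒢 c0) ρ t).2
  · obtain ⟨i, hi⟩ := hcap
    exact ⟨t, i, Or.inl hi⟩
  · have hne : ∃ j', WS 𝒢 j' t (PeriodicGraph.play (σA 𝒢 c0) ρ t).1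
        (PeriodicGraph.play (σA 𝒢 c0) ρ t).2 := ⟨j, hW⟩
    have hj0le : sInf {j' | WS 𝒢 j' t (PeriodicGraph.play (σA 𝒢 c0) ρ t).1
        (PeriodicGraph.play (σA 𝒢 c0) ρ t).2} ≤ j := Nat.sInf_le hW
    have hj0pos : sInf {j' | WS 𝒢 j' t (PeriodicGraph.play (σA 𝒢 c0) ρ t).1
        (PeriodicGraph.play (σA 𝒢 c0) ρ t).2} ≠ 0 := by
      intro hz
      have hmem := Nat.sInf_mem (show Set.Nonempty {j' | WS 𝒢 j' t
        (PeriodicGraph.play (σA 𝒢 c0) ρ t).1 (PeriodicGraph.play (σA 𝒢 c0) ρ t).2} from hne)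
      rw [hz] at hmem
      exact hcap hmem
    have hmv : (PeriodicGraph.play (σA 𝒢 c0) ρ (t + 1)).1 =
        copMove 𝒢 t (PeriodicGraph.play (σA 𝒢 c0) ρ t).1 (PeriodicGraph.play (σA 𝒢 c0) ρ t).2 :=
      rfl
    have hcm : copMove 𝒢 t (PeriodicGraph.play (σA 𝒢 c0) ρ t).1
        (PeriodicGraph.play (σA 𝒢 c0) ρ t).2 = (copMove_exists 𝒢 hcap hne).choose := by
      unfold copMove
      rw [dif_neg hcap, dif_pos hne]
    have hspec := (copMove_exists 𝒢 hcap hne).choose_spec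
    rcases hspec.2 with hcapnext | hall
    · obtain ⟨i, hi⟩ := hcapnext
      refine ⟨t, i, Or.inr ?_⟩
      rw [hmv, hcm]
      exact hi
    · have hrleg : (PeriodicGraph.play (σA 𝒢 c0) ρ (t + 1)).2 ∈
          cN (𝒢.snap t) (PeriodicGraph.play (σA 𝒢 c0) ρ t).2 :=
        hρ t _ _
      have hWnext : WS 𝒢 (sInf {j' | WS 𝒢 j' t (PeriodicGraph.play (σA 𝒢 c0) ρ t).1
          (PeriodicGraph.play (σA 𝒢 c0) ρ t).2} - 1) (t + 1)
          (PeriodicGraph.play (σA 𝒢 c0) ρ (t + 1)).1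
          (PeriodicGraph.play (σA 𝒢 c0) ρ (t + 1)).2 := by
        rw [hmv, hcm]
        exact hall _ hrleg
      exact IH _ (by omega) (t + 1) hWnext

lemma partA [Nonempty V]
    (hBeat : ∀ ρ : PeriodicGraph.RobStrategy 𝒢 k, ρ.Legal →
      ∃ σ : PeriodicGraph.CopStrategy 𝒢 k, σ.Legal ∧ PeriodicGraph.Captured σ ρ) :
    𝒢.CopsWin k := by
  classical
  by_cases hW : ∃ c0 : Fin k → V, ∀ r0, ∃ j, WS 𝒢 j 0 c0 r0
  · obtain ⟨c0, hc0⟩ := hW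
    refine ⟨σA 𝒢 c0, fun t c r i => copMove_legal 𝒢 t c r i, ?_⟩
    intro ρ hρ
    obtain ⟨j, hj⟩ := hc0 (ρ.init c0)
    exact cap_of_WS 𝒢 c0 ρ hρ j 0 hj
  · exfalso
    push_neg at hW
    obtain ⟨J, hstab⟩ := WS_stab 𝒢
    set ρ : PeriodicGraph.RobStrategy 𝒢 k :=
      ⟨fun c0 => (hW c0).choose,
       fun t c r => if h : ∃ r', r' ∈ cN (𝒢.snap t) r ∧ ¬ WS 𝒢 J (t + 1) c r'
         then h.choose else r⟩ with hρdef
    have hρleg : ρ.Legal := by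
      intro t c r
      show (if h : ∃ r', r' ∈ cN (𝒢.snap t) r ∧ ¬ WS 𝒢 J (t + 1) c r' then h.choose else r) ∈ _
      split_ifs with h
      · exact h.choose_spec.1
      · exact mem_cN_self _
    obtain ⟨σ, hσleg, hcapt⟩ := hBeat ρ hρleg
    have hkey : ∀ t, ¬ WS 𝒢 J t (PeriodicGraph.play σ ρ t).1 (PeriodicGraph.play σ ρ t).2 := by
      intro t
      induction t with
      | zero =>
        intro hc
        exact (hW σ.init).choose_spec J hc
      | succ t ih =>
        have hnot1 : ¬ WS 𝒢 (J + 1) t (PeriodicGraph.play σ ρ t).1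
            (PeriodicGraph.play σ ρ t).2 := fun h =>
          ih ((hstab (J + 1) (by omega) t _ _).1 h)
        have hnoE : ∀ c', (∀ i, c' i ∈ cN (𝒢.snap t) ((PeriodicGraph.play σ ρ t).1 i)) →
            ¬((∃ i, c' i = (PeriodicGraph.play σ ρ t).2) ∨
              ∀ r' ∈ cN (𝒢.snap t) (PeriodicGraph.play σ ρ t).2, WS 𝒢 J (t + 1) c' r') := by
          intro c' hleg hor
          exact hnot1 (Or.inr ⟨c', hleg, hor⟩)
        have hlegc' : ∀ i, (PeriodicGraph.play σ ρ (t + 1)).1 i ∈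
            cN (𝒢.snap t) ((PeriodicGraph.play σ ρ t).1 i) := fun i => hσleg t _ _ i
        have hex : ∃ r', r' ∈ cN (𝒢.snap t) (PeriodicGraph.play σ ρ t).2 ∧
            ¬ WS 𝒢 J (t + 1) (PeriodicGraph.play σ ρ (t + 1)).1 r' := by
          by_contra hno
          push_neg at hno
          exact hnoE _ hlegc' (Or.inr fun r' hr' => hno r' hr')
        have h2 : (PeriodicGraph.play σ ρ (t + 1)).2 = hex.choose := by
          show (if h : ∃ r', r' ∈ cN (𝒢.snap t) (PeriodicGraph.play σ ρ t).2 ∧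
              ¬ WS 𝒢 J (t + 1) (PeriodicGraph.play σ ρ (t + 1)).1 r'
            then h.choose else (PeriodicGraph.play σ ρ t).2) = hex.choose
          rw [dif_pos hex]
        intro hWnext
        rw [h2] at hWnext
        exact hex.choose_spec.2 hWnext
    obtain ⟨t, i, hcap | hcap⟩ := hcapt
    · exact hkey t (WS_mono 𝒢 J 0 (Nat.zero_le J) _ _ _ ⟨i, hcap⟩)
    · have h1 : ¬ WS 𝒢 (J + 1) t (PeriodicGraph.play σ ρ t).1
          (PeriodicGraph.play σ ρ t).2 := fun h =>
        hkey t ((hstab (J + 1) (by omega) t _ _).1 h)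
      apply h1
      exact Or.inr ⟨(PeriodicGraph.play σ ρ (t + 1)).1, fun i => hσleg t _ _ i,
        Or.inl ⟨i, hcap⟩⟩

end Determinacy

-- AUXMORE

/-- For every (temporally connected) periodic graph `𝒢` with
footprint `G`, `c(𝒢) ≤ tw(G) + 1`. -/
theorem copNumber_le_treewidth_add_one {V : Type*} [Fintype V] (𝒢 : PeriodicGraph V)
    (hconn : 𝒢.footprint.Connected) :
    𝒢.copNumber ≤ treewidth 𝒢.footprint + 1 := by
  classical
  haveI : Nonempty V := hconn.nonempty
  have hne : {w | TreeDecompWidthLE 𝒢.footprint w}.Nonempty := by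
    refine ⟨Fintype.card V - 1, Unit, ⊥, fun _ => Finset.univ, ⟨?_, ?_⟩, ?_, ?_, ?_, ?_⟩
    · constructor
      intro u v
      rw [Subsingleton.elim u v]
    · intro v c hc
      cases c with
      | nil =>
        have := hc.three_le_length
        simp at this
      | cons h q => exact h.elim
    · intro v; exact ⟨(), Finset.mem_univ v⟩
    · intro u v _; exact ⟨(), Finset.mem_univ u, Finset.mem_univ v⟩
    · intro v
      haveI : Nonempty ({x : Unit | v ∈ (fun _ : Unit => (Finset.univ : Finset V)) x}) :=
        ⟨⟨(), Finset.mem_univ v⟩⟩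
      constructor
      intro a b
      rw [Subsingleton.elim a b]
    · intro x
      rw [Finset.card_univ]
      have : 1 ≤ Fintype.card V := Fintype.card_pos
      omega
  have hTD : TreeDecompWidthLE 𝒢.footprint (treewidth 𝒢.footprint) := Nat.sInf_mem hne
  have hwin : 𝒢.CopsWin (treewidth 𝒢.footprint + 1) :=
    partA 𝒢 (beatAny 𝒢 hconn hTD rfl)
  exact Nat.sInf_le hwin
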